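/- arXiv:1003.2740 — 3 statements merged into one kernel-verified Lean document; each statement's English description precedes it below -/
import Mathlib

section
/- Let g:[0,l]→ℂ be a C¹ arc-length parameterization of a Jordan curve (so |g'(s)|=1 for all s), and let ω be a modulus of continuity for g' (i.e., |g'(s)−g'(t)| ≤ ω(|s−t|)). Define K(s,t) = Re[conj(g(t)−g(s)) · i g'(s)]. Then |K(s,t)| ≤ ∫₀^{|s−t|} ω(τ) dτ. -/
/-!
Since `Re (conj w * (I * w)) = 0`, subtracting the tangent step `(t - s) g'(s)` from the chord
`g(t) - g(s)` does not change `K(s,t)`, so `|K(s,t)| ≤ |g(t) - g(s) - (t - s) g'(s)|`. By the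
fundamental theorem of calculus this remainder is `∫ₛᵗ (g'(τ) - g'(s)) dτ`, whose norm is at most
`∫ₛᵗ ω(|τ - s|) dτ = ∫₀^{|s-t|} ω`.
-/

open Set Complex MeasureTheory intervalIntegral
open scoped Interval ComplexConjugate

section ModulusOfContinuity

variable {E : Type*} [NormedAddCommGroup E] [NormedSpace ℝ E]

/-- `f'` agrees a.e. with the measurable `deriv f`. -/
theorem intervalIntegrable_of_hasDerivAt_of_norm_le [CompleteSpace E] {f f' : ℝ → E} {a b C : ℝ}
    (hf : ∀ x ∈ Ι a b, HasDerivAt f (f' x) x) (hC : ∀ x ∈ Ι a b, ‖f' x‖ ≤ C) :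
    IntervalIntegrable f' volume a b := by
  have hmeas : AEStronglyMeasurable f' (volume.restrict (Ι a b)) :=
    (aestronglyMeasurable_deriv f _).congr <|
      (ae_restrict_iff' measurableSet_uIoc).2 <| .of_forall fun x hx => (hf x hx).deriv
  exact (intervalIntegrable_const (c := C)).mono_fun' hmeas <|
    (ae_restrict_iff' measurableSet_uIoc).2 <| .of_forall hC

theorem norm_integral_le_integral_of_norm_le_comp_abs_sub {h : ℝ → E} {ω : ℝ → ℝ} {s t : ℝ}
    (hω : MonotoneOn ω (Icc 0 |t - s|)) (hh : ∀ τ ∈ Ι s t, ‖h τ‖ ≤ ω |τ - s|) :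
    ‖∫ τ in s..t, h τ‖ ≤ ∫ τ in 0..|t - s|, ω τ := by
  have hωint : IntervalIntegrable ω volume 0 |t - s| :=
    MonotoneOn.intervalIntegrable (by rwa [uIcc_of_le (abs_nonneg _)])
  rcases le_total s t with hst | hts
  · rw [abs_of_nonneg (sub_nonneg.2 hst)] at hωint ⊢
    calc ‖∫ τ in s..t, h τ‖ ≤ ∫ τ in s..t, ω (τ - s) := by
          refine norm_integral_le_of_norm_le hst (.of_forall fun τ hτ => ?_) ?_
          · simpa [abs_of_nonneg (sub_nonneg.2 hτ.1.le)] using hh τ (by rwa [uIoc_of_le hst])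
          · simpa using hωint.comp_sub_right s
      _ = ∫ τ in 0..t - s, ω τ := by rw [integral_comp_sub_right, sub_self]
  · rw [abs_of_nonpos (sub_nonpos.2 hts), neg_sub] at hωint ⊢
    calc ‖∫ τ in s..t, h τ‖ = ‖∫ τ in t..s, h τ‖ := by rw [integral_symm, norm_neg]
      _ ≤ ∫ τ in t..s, ω (s - τ) := by
          refine norm_integral_le_of_norm_le hts (.of_forall fun τ hτ => ?_) ?_
          · simpa [abs_of_nonpos (sub_nonpos.2 hτ.2), neg_sub] using
              hh τ (by rwa [uIoc_of_ge hts])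
          · simpa using (hωint.comp_sub_left s).symm
      _ = ∫ τ in 0..s - t, ω τ := by rw [integral_comp_sub_left, sub_self]

theorem norm_sub_sub_smul_le_integral_of_modulus [CompleteSpace E] {f f' : ℝ → E}
    {ω : ℝ → ℝ} {s t : ℝ} (hf : ∀ τ ∈ [[s, t]], HasDerivAt f (f' τ) τ)
    (hω : MonotoneOn ω (Icc 0 |t - s|)) (hmod : ∀ τ ∈ [[s, t]], ‖f' τ - f' s‖ ≤ ω |τ - s|) :
    ‖f t - f s - (t - s) • f' s‖ ≤ ∫ τ in 0..|t - s|, ω τ := by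
  have hF : ∀ τ ∈ [[s, t]], HasDerivAt (fun x => f x - x • f' s) (f' τ - f' s) τ := fun τ hτ =>
    (hf τ hτ).sub (((hasDerivAt_id τ).smul_const (f' s)).congr_deriv (one_smul ℝ _))
  have hbound : ∀ τ ∈ Ι s t, ‖f' τ - f' s‖ ≤ ω |t - s| := fun τ hτ =>
    have hτ' := Ioc_subset_Icc_self hτ
    (hmod τ hτ').trans <| hω ⟨abs_nonneg _, abs_sub_left_of_mem_uIcc hτ'⟩
      ⟨abs_nonneg _, le_rfl⟩ (abs_sub_left_of_mem_uIcc hτ')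
  have hint := intervalIntegrable_of_hasDerivAt_of_norm_le
    (fun τ hτ => hF τ (Ioc_subset_Icc_self hτ)) hbound
  have hftc : ∫ τ in s..t, (f' τ - f' s) = f t - f s - (t - s) • f' s := by
    rw [integral_eq_sub_of_hasDerivAt hF hint, sub_smul]
    abel
  exact hftc ▸ norm_integral_le_integral_of_norm_le_comp_abs_sub hω
    fun τ hτ => hmod τ (Ioc_subset_Icc_self hτ)

end ModulusOfContinuity

/-- Only the component of `z` normal to `w` contributes, as `conj w * (I * w) = I * ‖w‖²`. -/
theorem abs_re_conj_mul_I_mul_le (z w : ℂ) (r : ℝ) :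
    |(conj z * (I * w)).re| ≤ ‖z - r • w‖ * ‖w‖ := by
  have hw : (conj w * (I * w)).re = 0 := by
    rw [mul_left_comm, conj_mul', ← ofReal_pow, re_mul_ofReal, I_re, zero_mul]
  have hnormal : (conj (z - r • w) * (I * w)).re = (conj z * (I * w)).re := by
    rw [map_sub, sub_mul, sub_re, real_smul, map_mul, conj_ofReal, mul_assoc, re_ofReal_mul, hw,
      mul_zero, sub_zero]
  calc |(conj z * (I * w)).re| = |(conj (z - r • w) * (I * w)).re| := by rw [hnormal]
    _ ≤ ‖conj (z - r • w) * (I * w)‖ := abs_re_le_norm _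
    _ = ‖z - r • w‖ * ‖w‖ := by rw [norm_mul, norm_mul, RCLike.norm_conj, norm_I, one_mul]

theorem stmt_2_general (l : ℝ) (g : ℝ → ℂ) (g' : ℝ → ℂ) (ω : ℝ → ℝ)
    (hderiv : ∀ s ∈ Icc 0 l, HasDerivAt g (g' s) s)
    (hunit : ∀ s ∈ Icc 0 l, ‖g' s‖ = 1)
    (hωmono : MonotoneOn ω (Icc 0 l))
    (hmod : ∀ s ∈ Icc 0 l, ∀ t ∈ Icc 0 l, ‖g' s - g' t‖ ≤ ω |s - t|) :
    ∀ s ∈ Icc 0 l, ∀ t ∈ Icc 0 l,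
      |((starRingEnd ℂ) (g t - g s) * (Complex.I * g' s)).re|
        ≤ ∫ τ in (0:ℝ)..|s - t|, ω τ := by
  intro s hs t ht
  have hsub : [[s, t]] ⊆ Icc 0 l := uIcc_subset_Icc hs ht
  have hω : MonotoneOn ω (Icc 0 |t - s|) := hωmono.mono <| Icc_subset_Icc_right <|
    abs_sub_le_iff.2 ⟨by linarith [ht.2, hs.1], by linarith [hs.2, ht.1]⟩
  have htaylor := norm_sub_sub_smul_le_integral_of_modulus (fun τ hτ => hderiv τ (hsub hτ)) hω
    fun τ hτ => hmod τ (hsub hτ) s hs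
  calc _ ≤ ‖g t - g s - (t - s) • g' s‖ * ‖g' s‖ := abs_re_conj_mul_I_mul_le _ _ _
    _ ≤ ∫ τ in (0:ℝ)..|s - t|, ω τ := by rwa [hunit s hs, mul_one, abs_sub_comm]

theorem stmt_2 (l : ℝ) (hl : 0 < l) (g : ℝ → ℂ) (g' : ℝ → ℂ) (ω : ℝ → ℝ)
    (hderiv : ∀ s ∈ Icc 0 l, HasDerivAt g (g' s) s)
    (hunit : ∀ s ∈ Icc 0 l, ‖g' s‖ = 1)
    (hωmono : MonotoneOn ω (Icc 0 l))
    (hωnonneg : ∀ x ∈ Icc 0 l, 0 ≤ ω x)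
    (hmod : ∀ s ∈ Icc 0 l, ∀ t ∈ Icc 0 l, ‖g' s - g' t‖ ≤ ω |s - t|) :
    ∀ s ∈ Icc 0 l, ∀ t ∈ Icc 0 l,
      |((starRingEnd ℂ) (g t - g s) * (Complex.I * g' s)).re|
        ≤ ∫ τ in (0:ℝ)..|s - t|, ω τ :=
  stmt_2_general l g g' ω hderiv hunit hωmono hmod
end

section
/- Let g:[0,l]→ℂ satisfy |g'|≡1 with g' having modulus of continuity ω, and extend K(s,t) = Re[conj(g(t)−g(s)) · i g'(s)] periodically by K(s±l, t±l)=K(s,t) (assuming g(s+l)=g(s) when extended). Then |K(s,t)| ≤ ∫₀^{min{|s−t|, l−|s−t|}} ω(τ) dτ for all s,t with |s−t| ≤ l. -/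
/-!
Since `i g'(s)` is orthogonal to `g'(s)`, replacing `g` by `h u = g u - u g'(s)` does not change
`K(s, t) = Re (conj (g t - g s) · i g'(s))`, and `‖h' u‖ = ‖g' u - g' s‖ ≤ ω |u - s|`. Integrating
this speed bound gives `|K(s, t)| ≤ ∫₀^{|t - s|} ω`. By periodicity `t` may be replaced by `t ∓ l`,
which leaves `K` unchanged and turns `|t - s|` into `l - |s - t|`.
-/

open Set Complex ComplexConjugate MeasureTheory intervalIntegral

theorem norm_sub_le_integral_of_norm_deriv_le_abs_sub {E : Type*} [NormedAddCommGroup E]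
    [NormedSpace ℝ E] {f : ℝ → E} {ω : ℝ → ℝ} {a b : ℝ}
    (hf : ∀ u ∈ uIcc a b, DifferentiableAt ℝ f u) (hω : MonotoneOn ω (Icc 0 |b - a|))
    (hf' : ∀ u ∈ uIcc a b, ‖deriv f u‖ ≤ ω |u - a|) :
    ‖f b - f a‖ ≤ ∫ τ in 0..|b - a|, ω τ := by
  rcases le_total a b with hab | hba
  · rw [uIcc_of_le hab] at hf hf'
    rw [abs_of_nonneg (sub_nonneg.2 hab)] at hω ⊢
    have hB : IntervalIntegrable (fun u ↦ ω (u - a)) volume a b := by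
      refine MonotoneOn.intervalIntegrable fun u hu v hv huv ↦ hω ?_ ?_ (by linarith)
      · rw [uIcc_of_le hab] at hu; exact ⟨by linarith [hu.1], by linarith [hu.2]⟩
      · rw [uIcc_of_le hab] at hv; exact ⟨by linarith [hv.1], by linarith [hv.2]⟩
    calc ‖f b - f a‖ ≤ ∫ u in a..b, ω (u - a) := by
          refine norm_sub_le_integral_of_norm_deriv_le_of_le hab
            (fun u hu ↦ (hf u hu).continuousAt.continuousWithinAt)
            (fun u hu ↦ (hf u (Ioo_subset_Icc_self hu)).differentiableWithinAt)
            (.of_forall fun u hu ↦ ?_) hB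
          simpa [abs_of_nonneg (sub_nonneg.2 hu.1.le)] using hf' u (Ioo_subset_Icc_self hu)
      _ = ∫ τ in 0..b - a, ω τ := by rw [integral_comp_sub_right, sub_self]
  · rw [uIcc_of_ge hba] at hf hf'
    rw [abs_of_nonpos (sub_nonpos.2 hba), neg_sub] at hω ⊢
    have hB : IntervalIntegrable (fun u ↦ ω (a - u)) volume b a := by
      refine AntitoneOn.intervalIntegrable fun u hu v hv huv ↦ hω ?_ ?_ (by linarith)
      · rw [uIcc_of_le hba] at hv; exact ⟨by linarith [hv.2], by linarith [hv.1]⟩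
      · rw [uIcc_of_le hba] at hu; exact ⟨by linarith [hu.2], by linarith [hu.1]⟩
    rw [norm_sub_rev]
    calc ‖f a - f b‖ ≤ ∫ u in b..a, ω (a - u) := by
          refine norm_sub_le_integral_of_norm_deriv_le_of_le hba
            (fun u hu ↦ (hf u hu).continuousAt.continuousWithinAt)
            (fun u hu ↦ (hf u (Ioo_subset_Icc_self hu)).differentiableWithinAt)
            (.of_forall fun u hu ↦ ?_) hB
          simpa [abs_of_nonpos (sub_nonpos.2 hu.2.le)] using hf' u (Ioo_subset_Icc_self hu)
      _ = ∫ τ in 0..a - b, ω τ := by rw [integral_comp_sub_left, sub_self]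

theorem re_conj_sub_smul_mul_I_mul (w z : ℂ) (r : ℝ) :
    (conj (w - r • z) * (I * z)).re = (conj w * (I * z)).re := by
  simp only [real_smul, map_sub, map_mul, conj_ofReal, sub_mul, sub_re, mul_re, mul_im,
    conj_re, conj_im, I_re, I_im, ofReal_re, ofReal_im]
  ring

theorem abs_re_conj_sub_mul_I_mul_deriv_le {g g' : ℝ → ℂ} {ω : ℝ → ℝ} {s t : ℝ}
    (hg : ∀ u ∈ uIcc s t, HasDerivAt g (g' u) u) (hg's : ‖g' s‖ ≤ 1)
    (hω : MonotoneOn ω (Icc 0 |t - s|)) (hmod : ∀ u ∈ uIcc s t, ‖g' u - g' s‖ ≤ ω |u - s|) :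
    |(conj (g t - g s) * (I * g' s)).re| ≤ ∫ τ in 0..|t - s|, ω τ := by
  set h : ℝ → ℂ := fun u ↦ g u - u • g' s
  have hh : ∀ u ∈ uIcc s t, HasDerivAt h (g' u - g' s) u := fun u hu ↦ by
    have := (hg u hu).sub ((hasDerivAt_id' u).smul_const (g' s))
    rwa [one_smul] at this
  have hK : (conj (g t - g s) * (I * g' s)).re = (conj (h t - h s) * (I * g' s)).re := by
    rw [show h t - h s = (g t - g s) - (t - s) • g' s by simp only [h, sub_smul]; abel,
      re_conj_sub_smul_mul_I_mul]
  calc |(conj (g t - g s) * (I * g' s)).re|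
      ≤ ‖conj (h t - h s) * (I * g' s)‖ := hK ▸ abs_re_le_norm _
    _ = ‖h t - h s‖ * ‖g' s‖ := by rw [norm_mul, norm_conj, norm_mul, norm_I, one_mul]
    _ ≤ ‖h t - h s‖ := mul_le_of_le_one_right (norm_nonneg _) hg's
    _ ≤ ∫ τ in 0..|t - s|, ω τ :=
        norm_sub_le_integral_of_norm_deriv_le_abs_sub (fun u hu ↦ (hh u hu).differentiableAt) hω
          fun u hu ↦ (hh u hu).deriv ▸ hmod u hu

theorem Function.Periodic.exists_eq_abs_sub_eq_sub_abs {α : Type*} {g : ℝ → α} {l : ℝ}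
    (hg : Function.Periodic g l) {s t : ℝ} (hst : |s - t| ≤ l) :
    ∃ t', g t' = g t ∧ |t' - s| = l - |s - t| := by
  rcases le_total s t with h | h
  · refine ⟨t - l, hg.sub_eq t, ?_⟩
    rw [abs_sub_comm s t, abs_of_nonneg (sub_nonneg.2 h)] at hst ⊢
    rw [abs_of_nonpos (by linarith)]
    ring
  · refine ⟨t + l, hg t, ?_⟩
    rw [abs_of_nonneg (sub_nonneg.2 h)] at hst ⊢
    rw [abs_of_nonneg (by linarith)]
    ring

theorem stmt_3_general (l : ℝ) (g : ℝ → ℂ) (g' : ℝ → ℂ) (ω : ℝ → ℝ)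
    (hper : ∀ s, g (s + l) = g s)
    (hderiv : ∀ s, HasDerivAt g (g' s) s)
    (hunit : ∀ s, ‖g' s‖ = 1)
    (hωmono : MonotoneOn ω (Icc 0 l))
    (hmod : ∀ s t : ℝ, |s - t| ≤ l → ‖g' s - g' t‖ ≤ ω |s - t|) :
    ∀ s t : ℝ, |s - t| ≤ l →
      |((starRingEnd ℂ) (g t - g s) * (Complex.I * g' s)).re|
        ≤ ∫ τ in (0:ℝ)..(min |s - t| (l - |s - t|)), ω τ := by
  intro s t hst
  have hbound : ∀ t', |t' - s| ≤ l →
      |(conj (g t' - g s) * (I * g' s)).re| ≤ ∫ τ in 0..|t' - s|, ω τ := fun t' ht' ↦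
    abs_re_conj_sub_mul_I_mul_deriv_le (fun u _ ↦ hderiv u) (hunit s).le
      (hωmono.mono (Icc_subset_Icc_right ht'))
      fun u hu ↦ hmod u s ((abs_sub_left_of_mem_uIcc hu).trans ht')
  obtain ⟨t', hgt', ht'⟩ := Function.Periodic.exists_eq_abs_sub_eq_sub_abs hper hst
  rcases min_choice |s - t| (l - |s - t|) with h | h <;> rw [h]
  · rw [abs_sub_comm] at hst ⊢
    exact hbound t hst
  · rw [← hgt', ← ht']
    exact hbound t' (by rw [ht']; linarith [abs_nonneg (s - t)])

theorem stmt_3 (l : ℝ) (hl : 0 < l) (g : ℝ → ℂ) (g' : ℝ → ℂ) (ω : ℝ → ℝ)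
    (hper : ∀ s, g (s + l) = g s)
    (hderiv : ∀ s, HasDerivAt g (g' s) s)
    (hunit : ∀ s, ‖g' s‖ = 1)
    (hωmono : MonotoneOn ω (Icc 0 l))
    (hωnonneg : ∀ x ∈ Icc 0 l, 0 ≤ ω x)
    (hmod : ∀ s t : ℝ, |s - t| ≤ l → ‖g' s - g' t‖ ≤ ω |s - t|) :
    ∀ s t : ℝ, |s - t| ≤ l →
      |((starRingEnd ℂ) (g t - g s) * (Complex.I * g' s)).re|
        ≤ ∫ τ in (0:ℝ)..(min |s - t| (l - |s - t|)), ω τ :=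
  stmt_3_general l g g' ω hper hderiv hunit hωmono hmod
end

section
/- Let φ:ℝ→ℝ be a nondecreasing L-Lipschitz surjective map with φ(x+a)=φ(x)+b for fixed a,b>0 and all x. Then there exists a sequence of C^∞ diffeomorphisms φₙ:ℝ→ℝ with φₙ(x+a)=φₙ(x)+b converging uniformly to φ. -/
open MeasureTheory intervalIntegral Filter Function Real Set

lemma slope_props {f : ℝ → ℝ} {δ : ℝ} (hδ : 0 < δ) (hd : Differentiable ℝ f)
    (hlow : ∀ x y : ℝ, x ≤ y → δ * (y - x) ≤ f y - f x) :
    Function.Bijective f ∧ ∀ x, 0 < deriv f x := by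
  have hslope : ∀ x y : ℝ, x ≠ y → δ ≤ slope f x y := by
    intro x y hxy
    rcases lt_or_gt_of_ne hxy with h | h
    · rw [slope_def_field, le_div_iff₀ (by linarith)]
      have := hlow x y h.le
      nlinarith
    · rw [slope_comm, slope_def_field, le_div_iff₀ (by linarith)]
      have := hlow y x h.le
      nlinarith
  have hderiv : ∀ x, δ ≤ deriv f x := by
    intro x
    have h1 : Tendsto (slope f x) (nhdsWithin x {x}ᶜ) (nhds (deriv f x)) :=
      hasDerivAt_iff_tendsto_slope.mp (hd x).hasDerivAt
    refine ge_of_tendsto h1 ?_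
    filter_upwards [self_mem_nhdsWithin] with y hy
    exact hslope x y (Ne.symm hy)
  have hmono : StrictMono f := by
    intro x y hxy
    have := hlow x y hxy.le
    nlinarith
  refine ⟨⟨hmono.injective, ?_⟩, fun x => lt_of_lt_of_le hδ (hderiv x)⟩
  apply Continuous.surjective hd.continuous
  · apply tendsto_atTop_mono' _ (_ : ∀ᶠ x in atTop, f 0 + δ * x ≤ f x)
    · exact tendsto_atTop_add_const_left _ (f 0) (Tendsto.const_mul_atTop hδ tendsto_id)
    · filter_upwards [eventually_ge_atTop (0:ℝ)] with x hx
      have := hlow 0 x hx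
      linarith
  · apply tendsto_atBot_mono' _ (_ : ∀ᶠ x in atBot, f x ≤ f 0 + δ * x)
    · exact tendsto_atBot_add_const_left _ (f 0) (Tendsto.const_mul_atBot hδ tendsto_id)
    · filter_upwards [eventually_le_atBot (0:ℝ)] with x hx
      have := hlow x 0 hx
      linarith

-- L1: key moment identity for the kernel (1+cos(ut))^(N+1), u = 2π/a
lemma kernel_moment (a : ℝ) (ha : 0 < a) (N : ℕ) :
    ((N : ℝ) + 2) * ∫ t in (-(a/2))..(a/2),
        (1 + Real.cos (2*π/a*t))^(N+1) * (1 - Real.cos (2*π/a*t)) =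
      ∫ t in (-(a/2))..(a/2), (1 + Real.cos (2*π/a*t))^(N+1) := by
  set u : ℝ := 2*π/a with hu
  have hu0 : u ≠ 0 := by
    simp only [hu]
    positivity
  have hderiv : ∀ t : ℝ, HasDerivAt (fun t => Real.sin (u*t) * (1 + Real.cos (u*t))^(N+1))
      (u * ((1 + Real.cos (u*t))^(N+1) * (((N:ℝ)+2) * Real.cos (u*t) - ((N:ℝ)+1)))) t := by
    intro t
    have h1 : HasDerivAt (fun t : ℝ => u*t) u t := by
      simpa using (hasDerivAt_id t).const_mul u
    have hsin : HasDerivAt (fun t => Real.sin (u*t)) (Real.cos (u*t) * u) t :=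
      (Real.hasDerivAt_sin (u*t)).comp t h1
    have hcos : HasDerivAt (fun t => Real.cos (u*t)) (-Real.sin (u*t) * u) t :=
      (Real.hasDerivAt_cos (u*t)).comp t h1
    have hbase : HasDerivAt (fun t => 1 + Real.cos (u*t)) (-Real.sin (u*t) * u) t := by
      exact hcos.const_add 1
    have hpow := hbase.fun_pow (N+1)
    have := hsin.fun_mul hpow
    refine this.congr_deriv (Eq.symm ?_)
    have hs : Real.sin (u*t)^2 = 1 - Real.cos (u*t)^2 := Real.sin_sq (u*t)
    simp only [Nat.add_sub_cancel, Nat.cast_add, Nat.cast_one]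
    set c := Real.cos (u*t)
    set s := Real.sin (u*t)
    linear_combination (u*((N:ℝ)+1)*(1+c)^N) * hs
  have hint : ∀ g : ℝ → ℝ, Continuous g → IntervalIntegrable g volume (-(a/2)) (a/2) :=
    fun g hg => hg.intervalIntegrable _ _
  have hFTC := intervalIntegral.integral_eq_sub_of_hasDerivAt
    (f := fun t => Real.sin (u*t) * (1 + Real.cos (u*t))^(N+1))
    (fun t _ => hderiv t) (hint _ (by fun_prop))
  have hend : Real.sin (u*(a/2)) = 0 ∧ Real.sin (u*(-(a/2))) = 0 := by
    have : u * (a/2) = π := by rw [hu]; field_simp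
    constructor
    · rw [this, Real.sin_pi]
    · rw [show u*(-(a/2)) = -(u*(a/2)) by ring, this, Real.sin_neg, Real.sin_pi, neg_zero]
  simp only [hend.1, hend.2, zero_mul, sub_zero, sub_self] at hFTC
  -- hFTC : ∫ u*(k*((N+2)c - (N+1))) = 0
  rw [intervalIntegral.integral_const_mul] at hFTC
  have hFTC2 : (∫ t in (-(a/2))..(a/2),
      (1 + Real.cos (u*t))^(N+1) * (((N:ℝ)+2) * Real.cos (u*t) - ((N:ℝ)+1))) = 0 := by
    rcases mul_eq_zero.mp hFTC with h | h
    · exact absurd h hu0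
    · exact h
  have hsplit : ∀ t : ℝ, (1 + Real.cos (u*t))^(N+1) * (((N:ℝ)+2) * Real.cos (u*t) - ((N:ℝ)+1))
      = (1 + Real.cos (u*t))^(N+1)
        - ((N:ℝ)+2) * ((1 + Real.cos (u*t))^(N+1) * (1 - Real.cos (u*t))) := by
    intro t; ring
  rw [intervalIntegral.integral_congr (g := fun t => (1 + Real.cos (u*t))^(N+1)
        - ((N:ℝ)+2) * ((1 + Real.cos (u*t))^(N+1) * (1 - Real.cos (u*t))))
      (fun t _ => hsplit t),
    intervalIntegral.integral_sub (hint _ (by fun_prop)) (hint _ (by fun_prop)),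
    intervalIntegral.integral_const_mul, sub_eq_zero] at hFTC2
  linarith [hFTC2]

-- L2: the map x ↦ ∫ (1+cos(u(x-s)))^N w(s) ds is analytic (ContDiff ℝ ⊤)
lemma Q_contDiff (a : ℝ) (ha : 0 < a) (N : ℕ) : ∀ (w : ℝ → ℝ), Continuous w →
    ContDiff ℝ (⊤ : ℕ∞) (fun x => ∫ s in (-(a/2))..(a/2),
      (1 + Real.cos (2*π/a*(x-s)))^N * w s) := by
  set u : ℝ := 2*π/a with hu
  induction N with
  | zero =>
    intro w hw
    simp only [pow_zero, one_mul]
    exact contDiff_const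
  | succ N ih =>
    intro w hw
    have hkey : ∀ x : ℝ, (∫ s in (-(a/2))..(a/2), (1 + Real.cos (u*(x-s)))^(N+1) * w s)
        = (∫ s in (-(a/2))..(a/2), (1 + Real.cos (u*(x-s)))^N * w s)
          + (Real.cos (u*x) * ∫ s in (-(a/2))..(a/2),
              (1 + Real.cos (u*(x-s)))^N * (Real.cos (u*s) * w s))
          + (Real.sin (u*x) * ∫ s in (-(a/2))..(a/2),
              (1 + Real.cos (u*(x-s)))^N * (Real.sin (u*s) * w s)) := by
      intro x
      rw [← intervalIntegral.integral_const_mul, ← intervalIntegral.integral_const_mul,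
        ← intervalIntegral.integral_add
          (Continuous.intervalIntegrable (by fun_prop) _ _)
          (Continuous.intervalIntegrable (by fun_prop) _ _),
        ← intervalIntegral.integral_add
          (Continuous.intervalIntegrable (by fun_prop) _ _)
          (Continuous.intervalIntegrable (by fun_prop) _ _)]
      apply intervalIntegral.integral_congr
      intro s _
      have hcs : Real.cos (u*(x-s)) = Real.cos (u*x) * Real.cos (u*s)
          + Real.sin (u*x) * Real.sin (u*s) := by
        rw [show u*(x-s) = u*x - u*s by ring, Real.cos_sub]
      show (1 + Real.cos (u*(x-s)))^(N+1) * w s = _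
      rw [pow_succ]
      nth_rewrite 2 [hcs]
      ring
    have hc : ContDiff ℝ (⊤ : ℕ∞) (fun x : ℝ => Real.cos (u*x)) :=
      Real.contDiff_cos.comp (contDiff_const.mul contDiff_id)
    have hs : ContDiff ℝ (⊤ : ℕ∞) (fun x : ℝ => Real.sin (u*x)) :=
      Real.contDiff_sin.comp (contDiff_const.mul contDiff_id)
    have hcd := (((ih w hw).add
        (hc.mul (ih (fun s => Real.cos (u*s) * w s) (by fun_prop)))).add
      (hs.mul (ih (fun s => Real.sin (u*s) * w s) (by fun_prop))))
    exact (funext hkey : _) ▸ hcd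

set_option maxHeartbeats 1600000 in
-- L3: analytic approximation of a Lipschitz, uniformly-increasing quasi-periodic map
lemma smooth_approx (a b : ℝ) (ha : 0 < a) (δ K₀ ε : ℝ) (hδ : 0 < δ) (hK : 0 ≤ K₀)
    (hε : 0 < ε) (g : ℝ → ℝ) (hgc : Continuous g)
    (hlow : ∀ x y : ℝ, x ≤ y → δ * (y - x) ≤ g y - g x)
    (hlip : ∀ x y : ℝ, |g x - g y| ≤ K₀ * |x - y|)
    (hper : ∀ x, g (x + a) = g x + b) :
    ∃ f : ℝ → ℝ, ContDiff ℝ (⊤ : ℕ∞) f ∧ Function.Bijective f ∧ (∀ x, 0 < deriv f x) ∧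
      (∀ x, f (x + a) = f x + b) ∧ ∀ x, |f x - g x| ≤ ε := by
  have hπ := Real.pi_pos
  set u : ℝ := 2*π/a with hu
  have hu0 : 0 < u := by positivity
  have hua : u * (a/2) = π := by rw [hu]; field_simp
  -- choose η
  set η : ℝ := min (a/2) (ε/(2*(K₀+1))) with hη
  have hη0 : 0 < η := lt_min (by linarith) (by positivity)
  have hηa : η ≤ a/2 := min_le_left _ _
  have hηε : K₀ * η ≤ ε/2 := by
    have h1 : η ≤ ε/(2*(K₀+1)) := min_le_right _ _
    have h2 : K₀ * η ≤ K₀ * (ε/(2*(K₀+1))) := by nlinarith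
    have h3 : K₀ * (ε/(2*(K₀+1))) ≤ ε/2 := by
      rw [mul_comm, div_mul_eq_mul_div, div_le_div_iff₀ (by positivity) (by norm_num : (0:ℝ) < 2)]
      nlinarith
    linarith
  have hcosη : Real.cos (u*η) < 1 := by
    have h1 : u * η ≤ u * (a/2) := by nlinarith
    have := Real.cos_lt_cos_of_nonneg_of_le_pi (le_refl (0:ℝ))
      (by rw [← hua]; linarith) (mul_pos hu0 hη0)
    simpa using this
  set D : ℝ := 1 - Real.cos (u*η) with hD
  have hD0 : 0 < D := by simp only [hD]; linarith
  set B : ℝ := K₀ * (a/2) / D with hB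
  have hB0 : 0 ≤ B := by
    rw [hB]
    exact div_nonneg (by nlinarith) hD0.le
  -- choose N
  obtain ⟨N, hN⟩ := exists_nat_gt (2*B/ε)
  have hNB : B / ((N:ℝ)+2) ≤ ε/2 := by
    rw [div_le_div_iff₀ (by positivity) (by norm_num)]
    have : 2*B/ε < (N:ℝ) := hN
    rw [div_lt_iff₀ hε] at this
    nlinarith [Nat.cast_nonneg (α := ℝ) N]
  -- the kernel
  set k : ℝ → ℝ := fun t => (1 + Real.cos (u*t))^(N+1) with hk
  have hkc : Continuous k := by fun_prop
  have hknn : ∀ t, 0 ≤ k t := by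
    intro t
    have := Real.neg_one_le_cos (u*t)
    simp only [hk]
    exact pow_nonneg (by linarith) _
  have hII : ∀ w : ℝ → ℝ, Continuous w → IntervalIntegrable w volume (-(a/2)) (a/2) :=
    fun w hw => hw.intervalIntegrable _ _
  set κ : ℝ := ∫ t in (-(a/2))..(a/2), k t with hκ
  have hκpos : 0 < κ := by
    apply intervalIntegral_pos_of_pos_on (hII _ hkc) _ (by linarith)
    intro t ht
    rcases ht with ⟨ht1, ht2⟩
    have habs : |t| < a/2 := abs_lt.mpr ⟨by linarith, by linarith⟩
    have h1 : |u * t| < π := by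
      rw [abs_mul, abs_of_pos hu0, ← hua]
      nlinarith
    have h2 : Real.cos π < Real.cos |u*t| :=
      Real.cos_lt_cos_of_nonneg_of_le_pi (abs_nonneg _) le_rfl h1
    rw [Real.cos_pi, Real.cos_abs] at h2
    have : 0 < 1 + Real.cos (u*t) := by linarith
    positivity
  have hκ0 : κ ≠ 0 := ne_of_gt hκpos
  -- kernel periodicity
  have hkper : Function.Periodic k a := by
    intro t
    simp only [hk]
    rw [show u*(t+a) = u*t + 2*π by rw [hu]; field_simp, Real.cos_add_two_pi]
  -- the function f
  set num : ℝ → ℝ := fun x => ∫ t in (-(a/2))..(a/2), k t * g (x - t) with hnum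
  set f : ℝ → ℝ := fun x => num x / κ with hf
  -- key slope property
  have hflow : ∀ x y : ℝ, x ≤ y → δ * (y - x) ≤ f y - f x := by
    intro x y hxy
    have h1 : num y - num x = ∫ t in (-(a/2))..(a/2), k t * (g (y-t) - g (x-t)) := by
      rw [← intervalIntegral.integral_sub (hII _ (by fun_prop)) (hII _ (by fun_prop))]
      apply intervalIntegral.integral_congr; intro t _; ring
    have h2 : δ * (y - x) * κ ≤ num y - num x := by
      rw [h1, hκ, show δ * (y - x) * (∫ t in (-(a/2))..(a/2), k t)
          = (∫ t in (-(a/2))..(a/2), k t) * (δ * (y - x)) by ring,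
        ← intervalIntegral.integral_mul_const]
      apply intervalIntegral.integral_mono_on (by linarith)
        (hII _ (by fun_prop)) (hII _ (by fun_prop))
      intro t _
      have := hlow (x - t) (y - t) (by linarith)
      have h3 : (y - t) - (x - t) = y - x := by ring
      rw [h3] at this
      calc k t * (δ * (y-x)) = δ * (y - x) * k t := by ring
        _ ≤ k t * (g (y-t) - g (x-t)) := by nlinarith [hknn t]
    have : f y - f x = (num y - num x)/κ := by rw [hf]; ring
    rw [this, le_div_iff₀ hκpos]
    linarith
  -- periodicity of f
  have hfper : ∀ x, f (x + a) = f x + b := by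
    intro x
    have h1 : num (x + a) = num x + b * κ := by
      rw [hnum, hκ]
      simp only
      rw [← intervalIntegral.integral_const_mul, ← intervalIntegral.integral_add
        (hII _ (by fun_prop)) (hII _ (by fun_prop))]
      apply intervalIntegral.integral_congr
      intro t _
      show k t * g (x + a - t) = k t * g (x - t) + b * k t
      have : g (x + a - t) = g (x - t) + b := by
        rw [show x + a - t = (x - t) + a by ring, hper]
      rw [this]; ring
    simp only [hf]
    rw [h1]
    field_simp
  -- closeness
  have hclose : ∀ x, |f x - g x| ≤ ε := by
    intro x
    have hgxκ : g x * κ = ∫ t in (-(a/2))..(a/2), k t * g x := by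
      rw [hκ, mul_comm, ← intervalIntegral.integral_mul_const]
    have h1 : f x - g x = (∫ t in (-(a/2))..(a/2), k t * (g (x-t) - g x))/κ := by
      have hnum' : (∫ t in (-(a/2))..(a/2), k t * (g (x-t) - g x))
          = num x - g x * κ := by
        rw [hgxκ, hnum, ← intervalIntegral.integral_sub (hII _ (by fun_prop))
          (hII _ (by fun_prop))]
        apply intervalIntegral.integral_congr; intro t _
        show k t * (g (x-t) - g x) = k t * g (x - t) - k t * g x
        ring
      have h2 : (num x - g x * κ)/κ = num x/κ - g x := by field_simp; try ring
      rw [hnum', h2]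
    -- moment bound
    have hmom := kernel_moment a ha N
    have hmom' : (∫ t in (-(a/2))..(a/2), k t * (1 - Real.cos (u*t))) = κ / ((N:ℝ)+2) := by
      rw [eq_div_iff (by positivity)]
      rw [mul_comm]
      exact hmom
    have habs : |∫ t in (-(a/2))..(a/2), k t * (g (x-t) - g x)|
        ≤ ∫ t in (-(a/2))..(a/2), k t * (K₀ * (η + (a/2) * (1 - Real.cos (u*t)) / D)) := by
      refine (intervalIntegral.abs_integral_le_integral_abs (by linarith)).trans ?_
      apply intervalIntegral.integral_mono_on (by linarith)
        (hII _ (Continuous.abs (by fun_prop))) (hII _ (by fun_prop))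
      intro t ht
      rw [abs_mul, abs_of_nonneg (hknn t)]
      have hg1 : |g (x-t) - g x| ≤ K₀ * |t| := by
        have := hlip (x-t) x
        have h2 : |x - t - x| = |t| := by rw [show x - t - x = -t by ring, abs_neg]
        rwa [h2] at this
      have hg2 : |t| ≤ η + (a/2) * (1 - Real.cos (u*t)) / D := by
        rcases le_or_gt |t| η with h | h
        · have : 0 ≤ (a/2) * (1 - Real.cos (u*t)) / D := by
            have := Real.cos_le_one (u*t)
            have : 0 ≤ 1 - Real.cos (u*t) := by linarith
            positivity
          linarith
        · have ht1 : |t| ≤ a/2 := by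
            rcases ht with ⟨h1, h2⟩
            rw [abs_le]; constructor <;> linarith
          have hcc : Real.cos (u*|t|) ≤ Real.cos (u*η) := by
            apply Real.cos_le_cos_of_nonneg_of_le_pi (by positivity)
            · rw [← hua]; nlinarith
            · nlinarith
          rw [show u * |t| = |u*t| by rw [abs_mul, abs_of_pos hu0], Real.cos_abs] at hcc
          have hrat : 1 ≤ (1 - Real.cos (u*t)) / D := by
            rw [le_div_iff₀ hD0, one_mul, hD]
            linarith
          have : a/2 ≤ (a/2) * ((1 - Real.cos (u*t)) / D) := by nlinarith
          calc |t| ≤ a/2 := ht1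
            _ ≤ (a/2) * ((1 - Real.cos (u*t)) / D) := this
            _ = (a/2) * (1 - Real.cos (u*t)) / D := by ring
            _ ≤ η + (a/2) * (1 - Real.cos (u*t)) / D := by linarith
      calc k t * |g (x-t) - g x| ≤ k t * (K₀ * |t|) := by nlinarith [hknn t]
        _ ≤ k t * (K₀ * (η + (a/2) * (1 - Real.cos (u*t)) / D)) := by
            have : K₀ * |t| ≤ K₀ * (η + (a/2) * (1 - Real.cos (u*t)) / D) := by nlinarith
            nlinarith [hknn t]
    have hsplit : (∫ t in (-(a/2))..(a/2), k t * (K₀ * (η + (a/2) * (1 - Real.cos (u*t)) / D)))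
        = K₀ * η * κ + (K₀ * (a/2) / D) * (κ / ((N:ℝ)+2)) := by
      have : ∀ t : ℝ, k t * (K₀ * (η + (a/2) * (1 - Real.cos (u*t)) / D))
          = (K₀ * η) * k t + (K₀ * (a/2) / D) * (k t * (1 - Real.cos (u*t))) := by
        intro t; field_simp
      rw [intervalIntegral.integral_congr (fun t _ => this t),
        intervalIntegral.integral_add (hII _ (by fun_prop)) (hII _ (by fun_prop)),
        intervalIntegral.integral_const_mul, intervalIntegral.integral_const_mul, hmom']
    rw [h1, abs_div, abs_of_pos hκpos, div_le_iff₀ hκpos]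
    calc |∫ t in (-(a/2))..(a/2), k t * (g (x-t) - g x)|
        ≤ K₀ * η * κ + (K₀ * (a/2) / D) * (κ / ((N:ℝ)+2)) := by rw [← hsplit]; exact habs
      _ ≤ (ε/2) * κ + (ε/2) * κ := by
          have e1 : K₀ * η * κ ≤ (ε/2) * κ := by nlinarith
          have e2 : (K₀ * (a/2) / D) * (κ / ((N:ℝ)+2)) ≤ (ε/2) * κ := by
            have h3 : (K₀*(a/2)/D) * (κ/((N:ℝ)+2)) = (B/((N:ℝ)+2)) * κ := by
              rw [hB]; ring
            rw [h3]
            nlinarith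
          linarith
      _ = ε * κ := by ring
  -- smoothness via trig expansion
  set ψ : ℝ → ℝ := fun s => g s - (b/a)*s with hψ
  have hψc : Continuous ψ := by fun_prop
  have hψper : Function.Periodic ψ a := by
    intro s
    have hba : b/a*a = b := div_mul_cancel₀ _ (ne_of_gt ha)
    simp only [hψ]
    rw [hper s]
    field_simp
    try ring
  set c₂ : ℝ := ∫ t in (-(a/2))..(a/2), k t * t with hc₂
  have hnum_eq : ∀ x, num x = (b/a)*x*κ - (b/a)*c₂
      + ∫ s in (-(a/2))..(a/2), (1 + Real.cos (u*(x-s)))^(N+1) * ψ s := by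
    intro x
    have e1 : num x = (∫ t in (-(a/2))..(a/2), (((b/a)*x) * k t - (b/a)*(k t * t)))
        + ∫ t in (-(a/2))..(a/2), k t * ψ (x-t) := by
      rw [hnum, ← intervalIntegral.integral_add (hII _ (by fun_prop)) (hII _ (by fun_prop))]
      apply intervalIntegral.integral_congr
      intro t _
      show k t * g (x - t) = ((b/a)*x) * k t - (b/a)*(k t * t) + k t * ψ (x-t)
      simp only [hψ]
      ring
    have e2 : (∫ t in (-(a/2))..(a/2), (((b/a)*x) * k t - (b/a)*(k t * t)))
        = (b/a)*x*κ - (b/a)*c₂ := by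
      rw [intervalIntegral.integral_sub (hII _ (by fun_prop)) (hII _ (by fun_prop)),
        intervalIntegral.integral_const_mul, intervalIntegral.integral_const_mul, hκ, hc₂]
    have e3 : (∫ t in (-(a/2))..(a/2), k t * ψ (x-t))
        = ∫ s in (-(a/2))..(a/2), k (x-s) * ψ s := by
      have h4 : (∫ t in (-(a/2))..(a/2), k t * ψ (x-t))
          = ∫ s in (x-(a/2))..(x+(a/2)), k (x-s) * ψ s := by
        have := intervalIntegral.integral_comp_sub_left
          (a := -(a/2)) (b := (a/2)) (fun s => k (x-s) * ψ s) x
        simp only [show x - -(a/2) = x + (a/2) by ring] at this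
        rw [← this]
        apply intervalIntegral.integral_congr
        intro t _
        show k t * ψ (x - t) = k (x - (x - t)) * ψ (x - t)
        rw [show x - (x - t) = t by ring]
      have hWper : Function.Periodic (fun s => k (x-s) * ψ s) a := by
        intro s
        show k (x - (s+a)) * ψ (s+a) = k (x-s) * ψ s
        rw [hψper s, show x - (s+a) = (x-s) - a by ring, hkper.sub_eq]
      have h5 := hWper.intervalIntegral_add_eq (x-(a/2)) (-(a/2))
      rw [show x-(a/2)+a = x+(a/2) by ring, show -(a/2)+a = a/2 by ring] at h5
      rw [h4, h5]
    rw [e1, e2, e3]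
  have hQ := Q_contDiff a ha (N+1) ψ hψc
  rw [← hu] at hQ
  have hsm : ContDiff ℝ (⊤ : ℕ∞) f := by
    have h6 : ContDiff ℝ (⊤ : ℕ∞) (fun x => ((b/a)*x*κ - (b/a)*c₂
        + ∫ s in (-(a/2))..(a/2), (1 + Real.cos (u*(x-s)))^(N+1) * ψ s)/κ) :=
      ((((contDiff_const.mul contDiff_id).mul contDiff_const).sub contDiff_const).add
        hQ).div_const κ
    have h7 : f = fun x => ((b/a)*x*κ - (b/a)*c₂
        + ∫ s in (-(a/2))..(a/2), (1 + Real.cos (u*(x-s)))^(N+1) * ψ s)/κ := by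
      funext x
      simp only [hf]
      rw [hnum_eq x]
    rw [h7]
    exact h6
  obtain ⟨hbij, hderiv⟩ := slope_props hδ (hsm.differentiable (by simp)) hflow
  exact ⟨f, hsm, hbij, hderiv, hfper, hclose⟩

set_option maxHeartbeats 2000000 in
theorem stmt_5 (L a b : ℝ) (hL : 0 < L) (ha : 0 < a) (hb : 0 < b)
    (φ : ℝ → ℝ) (hmono : Monotone φ) (hsurj : Function.Surjective φ)
    (hlip : LipschitzWith (Real.toNNReal L) φ)
    (hper : ∀ x, φ (x + a) = φ x + b) :
    ∃ φseq : ℕ → ℝ → ℝ,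
      (∀ n, ContDiff ℝ (⊤ : ℕ∞) (φseq n)) ∧
      (∀ n, Function.Bijective (φseq n)) ∧
      (∀ n x, 0 < deriv (φseq n) x) ∧
      (∀ n x, φseq n (x + a) = φseq n x + b) ∧
      TendstoUniformly φseq φ Filter.atTop := by
  have hφc : Continuous φ := hlip.continuous
  have hlipR : ∀ x y : ℝ, |φ x - φ y| ≤ L * |x - y| := by
    intro x y
    have := hlip.dist_le_mul x y
    rwa [Real.dist_eq, Real.dist_eq, Real.coe_toNNReal L hL.le] at this
  -- bound on φ x - (b/a) x
  obtain ⟨C, hC0, hC⟩ : ∃ C : ℝ, 0 ≤ C ∧ ∀ x, |φ x - (b/a)*x| ≤ C := by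
    set h : ℝ → ℝ := fun x => φ x - (b/a)*x with hh
    have hhper : Function.Periodic h a := by
      intro x
      simp only [hh]
      rw [hper x]
      field_simp
      try ring
    have hbd := hhper.isBounded_of_continuous (ne_of_gt ha) (by fun_prop)
    obtain ⟨r, hr⟩ := hbd.subset_closedBall 0
    refine ⟨max r 0, le_max_right _ _, fun x => ?_⟩
    have := hr ⟨x, rfl⟩
    rw [Metric.mem_closedBall, Real.dist_0_eq_abs] at this
    exact this.trans (le_max_left _ _)
  -- key approximation step
  have key : ∀ ε : ℝ, 0 < ε → ∃ f : ℝ → ℝ, ContDiff ℝ (⊤ : ℕ∞) f ∧ Function.Bijective f ∧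
      (∀ x, 0 < deriv f x) ∧ (∀ x, f (x + a) = f x + b) ∧ ∀ x, |f x - φ x| ≤ ε := by
    intro ε hε
    obtain ⟨m, hm⟩ := exists_nat_gt (2*a*C/(ε*b))
    set M : ℝ := (m:ℝ) + 1 with hM
    have hM1 : (1:ℝ) ≤ M := by
      simp only [hM]
      linarith [Nat.cast_nonneg (α := ℝ) m]
    have hM0 : 0 < M := by linarith
    have hMε : a*C/(M*b+a) ≤ ε/2 := by
      rw [div_le_div_iff₀ (by positivity) (by norm_num)]
      have h1 : 2*a*C/(ε*b) < M := by simp only [hM]; linarith [hm]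
      rw [div_lt_iff₀ (by positivity)] at h1
      nlinarith
    have hMba : 0 < M*b + a := by positivity
    set c : ℝ := M*b/(M*b+a) with hc
    have hc0 : 0 < c := by positivity
    have hc1 : c ≤ 1 := by
      rw [hc, div_le_one hMba]; linarith
    set g : ℝ → ℝ := fun x => c*(φ x + x/M) with hg
    have hgc : Continuous g := by fun_prop
    have hglow : ∀ x y : ℝ, x ≤ y → (c/M) * (y - x) ≤ g y - g x := by
      intro x y hxy
      have h1 : φ x ≤ φ y := hmono hxy
      simp only [hg]
      have h2 : c*(φ y + y/M) - c*(φ x + x/M) = c*(φ y - φ x) + (c/M)*(y-x) := by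
        field_simp; ring
      rw [h2]
      nlinarith
    have hglip : ∀ x y : ℝ, |g x - g y| ≤ (L+1) * |x - y| := by
      intro x y
      have h1 : g x - g y = c * ((φ x - φ y) + (x-y)/M) := by
        simp only [hg]; field_simp; ring
      rw [h1, abs_mul, abs_of_nonneg hc0.le]
      have h2 := abs_add_le (φ x - φ y) ((x-y)/M)
      have h3 : |(x-y)/M| = |x-y|/M := by rw [abs_div, abs_of_pos hM0]
      have h4 := hlipR x y
      have h5 : |x-y|/M ≤ |x-y| := by
        rw [div_le_iff₀ hM0]
        nlinarith [abs_nonneg (x-y)]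
      have h6 : |(φ x - φ y) + (x-y)/M| ≤ L*|x-y| + |x-y| := by linarith
      nlinarith [abs_nonneg ((φ x - φ y) + (x-y)/M), abs_nonneg (x-y)]
    have hgper : ∀ x, g (x + a) = g x + b := by
      intro x
      simp only [hg]
      rw [hper x]
      have : c*(b + a/M) = b := by
        rw [hc]; field_simp
      calc c*(φ x + b + (x+a)/M) = c*(φ x + x/M) + c*(b + a/M) := by field_simp; ring
        _ = c*(φ x + x/M) + b := by rw [this]
    have hgclose : ∀ x, |g x - φ x| ≤ ε/2 := by
      intro x
      have h1 : g x - φ x = (a/(M*b+a))*((b/a)*x - φ x) := by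
        simp only [hg, hc]; field_simp; ring
      rw [h1, abs_mul, abs_of_pos (by positivity), abs_sub_comm]
      calc (a/(M*b+a))*|φ x - (b/a)*x| ≤ (a/(M*b+a))*C := by
            have := hC x
            have hpos : 0 < a/(M*b+a) := by positivity
            nlinarith
        _ = a*C/(M*b+a) := by ring
        _ ≤ ε/2 := hMε
    obtain ⟨f, hf1, hf2, hf3, hf4, hf5⟩ := smooth_approx a b ha (c/M) (L+1) (ε/2)
      (by positivity) (by linarith) (by linarith) g hgc hglow hglip hgper
    refine ⟨f, hf1, hf2, hf3, hf4, fun x => ?_⟩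
    calc |f x - φ x| = |(f x - g x) + (g x - φ x)| := by ring_nf
      _ ≤ |f x - g x| + |g x - φ x| := abs_add_le _ _
      _ ≤ ε/2 + ε/2 := add_le_add (hf5 x) (hgclose x)
      _ = ε := by ring
  -- assemble the sequence
  choose F hF1 hF2 hF3 hF4 hF5 using fun n : ℕ => key (1/((n:ℝ)+1)) (by positivity)
  refine ⟨F, hF1, hF2, hF3, hF4, ?_⟩
  rw [Metric.tendstoUniformly_iff]
  intro ε hε
  obtain ⟨Nn, hNn⟩ := exists_nat_gt (1/ε)
  rw [Filter.eventually_atTop]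
  refine ⟨Nn, fun n hn x => ?_⟩
  have h1 := hF5 n x
  have h2 : 1/((n:ℝ)+1) < ε := by
    rw [div_lt_iff₀ (by positivity)]
    have : (Nn:ℝ) ≤ (n:ℝ) := Nat.cast_le.mpr hn
    rw [div_lt_iff₀ hε] at hNn
    nlinarith
  rw [Real.dist_eq, abs_sub_comm]
  linarith
end
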